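/- Assume Υ(0) = Υ₀ = 3/4 (i.e. n₀ = 3), Υ(1) = 1, σ(0) = 0, σ(1) = γ₁ − 1 with 1 < γ₁ ≤ 2, f(0) = f₀ > 0, f(1) > 0. Then no interior orbit converges to the fixed point B₁ = (0, 4/5, 0) as λ → ∞. -/

import Mathlib

/-!
Linearising `F` at `B₁ = (0, 4/5, 0)`, where `Υ = 3/4` and `σ = 0`, the `V`-direction is unstable
with eigenvalue `1/5`, `Ω` decays and `U` is a centre direction. Let `y = V - 4/5 + 4U/25` be the
unstable coordinate and `C` a Lipschitz constant of `Υ` and `σ` at `0`. In the cone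
`y ≥ U/20 + 700CΩ` one has `y' ≥ y/10`, and the cone is forward invariant, so an orbit that enters
it cannot converge to `B₁`. Outside the cone `(log U)' ≥ -2700CΩ`, while `Ω' ≤ -μΩ`; hence
`log U - (2700C/μ)Ω` is nondecreasing and `U` stays bounded away from `0`.
-/

open Set Filter Topology

/-- `H(U,V,Ω) = (1+σ(Ω))V(1−U+σ(Ω)U)`. -/
noncomputable def Hfun (σ : ℝ → ℝ) (U V W : ℝ) : ℝ :=
  (1 + σ W) * V * (1 - U + σ W * U)

/-- The vector field `F` on the cube `[0,1]³` in coordinates `(U,V,Ω)`. -/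
noncomputable def Ffield (Υ σ f : ℝ → ℝ) (U V W : ℝ) : ℝ × ℝ × ℝ :=
  (U * (1 - U) * ((1 - V) * (3 - 4 * U) - Υ W * Hfun σ U V W),
   V * (1 - V) * ((2 * U - 1) * (1 - V + 2 * σ W * V) + (1 - Υ W) * Hfun σ U V W),
   -(f W) * W * (1 - W) * Hfun σ U V W)

lemma abs_mul_le_mul {α : Type*} [Ring α] [LinearOrder α] [IsOrderedRing α] {x y X Y : α}
    (hx : |x| ≤ X) (hy : |y| ≤ Y) : |x * y| ≤ X * Y :=
  (abs_mul x y).trans_le (mul_le_mul hx hy (abs_nonneg y) ((abs_nonneg x).trans hx))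

lemma exists_abs_sub_le_mul_of_contDiffOn {F : ℝ → ℝ} {a b : ℝ}
    (hF : ContDiffOn ℝ 1 F (Icc a b)) :
    ∃ C, 0 ≤ C ∧ ∀ x ∈ Icc a b, |F x - F a| ≤ C * (x - a) := by
  obtain ⟨C, hC⟩ := hF.exists_lipschitzOnWith one_ne_zero (convex_Icc a b) isCompact_Icc
  refine ⟨C, C.2, fun x hx => ?_⟩
  have := hC.dist_le_mul x hx a (left_mem_Icc.2 (hx.1.trans hx.2))
  rwa [Real.dist_eq, Real.dist_eq, abs_of_nonneg (sub_nonneg.2 hx.1)] at this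

/-- The region `g ≤ y` is forward invariant and `y` increases in it, so it is never entered if
`y → 0`. -/
lemma forall_lt_of_tendsto_zero {y y' g g' : ℝ → ℝ} {L : ℝ}
    (hy : ∀ t, HasDerivAt y (y' t) t) (hg : ∀ t, HasDerivAt g (g' t) t)
    (hpos : ∀ t ≥ L, g t ≤ y t → 0 < y t) (hmono : ∀ t ≥ L, g t ≤ y t → 0 ≤ y' t)
    (hcross : ∀ t ≥ L, g t = y t → g' t < y' t) (hlim : Tendsto y atTop (𝓝 0)) :
    ∀ t ≥ L, y t < g t := by
  by_contra! ⟨t₀, ht₀, hle⟩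
  have hy_cont : Continuous y := continuous_iff_continuousAt.2 fun t => (hy t).continuousAt
  have hg_cont : Continuous g := continuous_iff_continuousAt.2 fun t => (hg t).continuousAt
  have hinv : ∀ t ≥ t₀, g t ≤ y t := fun t ht =>
    image_le_of_deriv_right_lt_deriv_boundary' hg_cont.continuousOn
      (fun x _ => (hg x).hasDerivWithinAt) hle hy_cont.continuousOn
      (fun x _ => (hy x).hasDerivWithinAt) (fun x hx => hcross x (ht₀.trans hx.1)) ⟨ht, le_rfl⟩
  have hmon : MonotoneOn y (Ici t₀) :=
    monotoneOn_of_hasDerivWithinAt_nonneg (convex_Ici t₀) hy_cont.continuousOn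
      (fun x _ => (hy x).hasDerivWithinAt) fun x hx =>
        hmono x (ht₀.trans (interior_subset hx)) (hinv x (interior_subset hx))
  obtain ⟨t, hty, htt⟩ :=
    ((hlim.eventually (gt_mem_nhds (hpos t₀ ht₀ hle))).and (eventually_ge_atTop t₀)).exists
  exact (hmon self_mem_Ici htt htt).not_gt hty

lemma not_tendsto_zero_of_deriv_ge {u u' w w' : ℝ → ℝ} {L c μ : ℝ} (hc : 0 ≤ c) (hμ : 0 < μ)
    (hu : ∀ t, HasDerivAt u (u' t) t) (hw : ∀ t, HasDerivAt w (w' t) t)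
    (hu₀ : ∀ t ≥ L, 0 < u t) (hw₀ : ∀ t ≥ L, 0 ≤ w t)
    (hu' : ∀ t ≥ L, -(c * w t) * u t ≤ u' t) (hw' : ∀ t ≥ L, w' t ≤ -(μ * w t)) :
    ¬ Tendsto u atTop (𝓝 0) := by
  intro hlim
  -- `χ` is nondecreasing and `w ≥ 0`, so `u ≥ exp (χ L)`.
  set χ := fun t => Real.log (u t) - c / μ * w t
  have hχ : ∀ t ≥ L, HasDerivAt χ (u' t / u t - c / μ * w' t) t := fun t ht =>
    ((hu t).log (hu₀ t ht).ne').sub ((hw t).const_mul _)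
  have hχ' : ∀ t ≥ L, 0 ≤ u' t / u t - c / μ * w' t := fun t ht => by
    have h₁ : -(c * w t) ≤ u' t / u t := (le_div_iff₀ (hu₀ t ht)).2 (hu' t ht)
    have h₂ : c / μ * w' t ≤ c / μ * -(μ * w t) :=
      mul_le_mul_of_nonneg_left (hw' t ht) (div_nonneg hc hμ.le)
    rw [show c / μ * -(μ * w t) = -(c * w t) by field_simp] at h₂
    linarith
  have hmon : MonotoneOn χ (Ici L) :=
    monotoneOn_of_hasDerivWithinAt_nonneg (convex_Ici L)
      (fun t ht => (hχ t ht).continuousAt.continuousWithinAt)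
      (fun t ht => (hχ t (interior_subset ht)).hasDerivWithinAt)
      fun t ht => hχ' t (interior_subset ht)
  have hbound : ∀ t ≥ L, Real.exp (χ L) ≤ u t := fun t ht => by
    have hχt : χ L ≤ χ t := hmon self_mem_Ici ht ht
    have hw_t : 0 ≤ c / μ * w t := mul_nonneg (div_nonneg hc hμ.le) (hw₀ t ht)
    calc Real.exp (χ L) ≤ Real.exp (Real.log (u t)) := Real.exp_le_exp.2 (by linarith)
      _ = u t := Real.exp_log (hu₀ t ht)
  obtain ⟨t, htu, htL⟩ :=
    ((hlim.eventually (gt_mem_nhds (Real.exp_pos (χ L)))).and (eventually_ge_atTop L)).exists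
  exact (hbound t htL).not_gt htu

noncomputable def growthU (Υ σ : ℝ → ℝ) (U V W : ℝ) : ℝ :=
  (1 - V) * (3 - 4 * U) - Υ W * Hfun σ U V W

noncomputable def growthV (Υ σ : ℝ → ℝ) (U V W : ℝ) : ℝ :=
  (2 * U - 1) * (1 - V + 2 * σ W * V) + (1 - Υ W) * Hfun σ U V W

lemma Ffield_fst_eq (Υ σ f : ℝ → ℝ) (U V W : ℝ) :
    (Ffield Υ σ f U V W).1 = U * (1 - U) * growthU Υ σ U V W := rfl

lemma Ffield_snd_fst_eq (Υ σ f : ℝ → ℝ) (U V W : ℝ) :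
    (Ffield Υ σ f U V W).2.1 = V * (1 - V) * growthV Υ σ U V W := rfl

/-- `(4/25, 1, 0)` is a left eigenvector of the linearisation of `F` at `B₁`, for the eigenvalue
`1/5`. -/
noncomputable def unstableCoord (U V : ℝ) : ℝ := V - 4 / 5 + 4 / 25 * U

/-- `w` bounds the deviation of `Υ Ω` and `σ Ω` from their values at `Ω = 0`; along the orbit it
is `C * Ω`. -/
structure NearB₁ (Υ σ : ℝ → ℝ) (U V W w : ℝ) : Prop where
  U_pos : 0 < U
  U_le : U ≤ 1 / 4000
  abs_V_sub_le : |V - 4 / 5| ≤ 1 / 4000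
  W_nonneg : 0 ≤ W
  W_le : W ≤ w
  w_le : w ≤ 1 / 4000
  abs_Υ_sub_le : |Υ W - 3 / 4| ≤ w
  abs_σ_le : |σ W| ≤ w

namespace NearB₁

variable {Υ σ : ℝ → ℝ} {U V W w : ℝ}

lemma w_nonneg (h : NearB₁ Υ σ U V W w) : 0 ≤ w := h.W_nonneg.trans h.W_le

lemma abs_V_le (h : NearB₁ Υ σ U V W w) : |V| ≤ 1 := by
  obtain ⟨h₁, h₂⟩ := abs_le.mp h.abs_V_sub_le
  exact abs_le.mpr ⟨by linarith, by linarith⟩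

lemma abs_Hfun_sub_le (h : NearB₁ Υ σ U V W w) : |Hfun σ U V W - V * (1 - U)| ≤ 2 * w := by
  have hid : Hfun σ U V W - V * (1 - U) = V * σ W * (1 + σ W * U) := by unfold Hfun; ring
  have hσU : |1 + σ W * U| ≤ 2 := by
    have : |σ W * U| ≤ 1 * 1 := abs_mul_le_mul (h.abs_σ_le.trans (h.w_le.trans (by norm_num)))
      (abs_le.mpr ⟨by linarith [h.U_pos], by linarith [h.U_le]⟩)
    exact (abs_add_le _ _).trans (by rw [abs_one]; linarith)
  rw [hid]
  calc |V * σ W * (1 + σ W * U)| ≤ 1 * w * 2 :=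
        abs_mul_le_mul (abs_mul_le_mul h.abs_V_le h.abs_σ_le) hσU
    _ = 2 * w := by ring

lemma three_quarters_le_Hfun (h : NearB₁ Υ σ U V W w) : 3 / 4 ≤ Hfun σ U V W := by
  obtain ⟨hV, -⟩ := abs_le.mp h.abs_V_sub_le
  obtain ⟨hH, -⟩ := abs_le.mp h.abs_Hfun_sub_le
  nlinarith [h.U_le, h.w_le, h.U_pos]

lemma abs_Hfun_le (h : NearB₁ Υ σ U V W w) : |Hfun σ U V W| ≤ 1 := by
  obtain ⟨hV₁, hV₂⟩ := abs_le.mp h.abs_V_sub_le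
  obtain ⟨-, hH⟩ := abs_le.mp h.abs_Hfun_sub_le
  rw [abs_of_pos (by linarith [h.three_quarters_le_Hfun])]
  nlinarith [mul_pos (show 0 < V by linarith) h.U_pos, h.w_le]

lemma abs_growthU_add_le (h : NearB₁ Υ σ U V W w) :
    |growthU Υ σ U V W + U / 5 + 15 / 4 * (V - 4 / 5)| ≤ 5 * U * |V - 4 / 5| + 3 * w := by
  have hid : growthU Υ σ U V W + U / 5 + 15 / 4 * (V - 4 / 5) =
      19 / 4 * U * (V - 4 / 5) - 3 / 4 * (Hfun σ U V W - V * (1 - U)) -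
        (Υ W - 3 / 4) * Hfun σ U V W := by unfold growthU; ring
  have e₁ : |19 / 4 * U * (V - 4 / 5)| = 19 / 4 * U * |V - 4 / 5| := by
    rw [abs_mul, abs_mul, abs_of_pos h.U_pos]; norm_num
  have e₂ : |3 / 4 * (Hfun σ U V W - V * (1 - U))| ≤ 3 / 4 * (2 * w) :=
    abs_mul_le_mul (by norm_num) h.abs_Hfun_sub_le
  have e₃ : |(Υ W - 3 / 4) * Hfun σ U V W| ≤ w * 1 := abs_mul_le_mul h.abs_Υ_sub_le h.abs_Hfun_le
  rw [hid]
  calc _ ≤ |19 / 4 * U * (V - 4 / 5)| + |3 / 4 * (Hfun σ U V W - V * (1 - U))| +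
        |(Υ W - 3 / 4) * Hfun σ U V W| := (abs_sub _ _).trans (by gcongr; exact abs_sub _ _)
    _ ≤ 5 * U * |V - 4 / 5| + 3 * w := by
        linarith [mul_nonneg h.U_pos.le (abs_nonneg (V - 4 / 5)), h.w_nonneg]

lemma abs_growthV_sub_le (h : NearB₁ Υ σ U V W w) :
    |growthV Υ σ U V W - 5 / 4 * unstableCoord U V| ≤ 3 * U * |V - 4 / 5| + 4 * w := by
  have hid : growthV Υ σ U V W - 5 / 4 * unstableCoord U V =
      -(9 / 4 * U * (V - 4 / 5)) + 2 * (2 * U - 1) * σ W * V +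
        1 / 4 * (Hfun σ U V W - V * (1 - U)) - (Υ W - 3 / 4) * Hfun σ U V W := by
    unfold growthV unstableCoord; ring
  have e₁ : |-(9 / 4 * U * (V - 4 / 5))| = 9 / 4 * U * |V - 4 / 5| := by
    rw [abs_neg, abs_mul, abs_mul, abs_of_pos h.U_pos]; norm_num
  have e₂ : |2 * (2 * U - 1) * σ W * V| ≤ 2 * 1 * w * 1 :=
    abs_mul_le_mul (abs_mul_le_mul (abs_mul_le_mul (by norm_num)
      (abs_le.mpr ⟨by linarith [h.U_pos], by linarith [h.U_le]⟩)) h.abs_σ_le) h.abs_V_le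
  have e₃ : |1 / 4 * (Hfun σ U V W - V * (1 - U))| ≤ 1 / 4 * (2 * w) :=
    abs_mul_le_mul (by norm_num) h.abs_Hfun_sub_le
  have e₄ : |(Υ W - 3 / 4) * Hfun σ U V W| ≤ w * 1 := abs_mul_le_mul h.abs_Υ_sub_le h.abs_Hfun_le
  rw [hid]
  calc _ ≤ |-(9 / 4 * U * (V - 4 / 5))| + |2 * (2 * U - 1) * σ W * V| +
        |1 / 4 * (Hfun σ U V W - V * (1 - U))| + |(Υ W - 3 / 4) * Hfun σ U V W| :=
        (abs_sub _ _).trans (by gcongr; exact abs_add_three _ _ _)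
    _ ≤ 3 * U * |V - 4 / 5| + 4 * w := by
        linarith [mul_nonneg h.U_pos.le (abs_nonneg (V - 4 / 5)), h.w_nonneg]

lemma abs_growthU_le (h : NearB₁ Υ σ U V W w) : |growthU Υ σ U V W| ≤ 1 / 500 := by
  obtain ⟨hG₁, hG₂⟩ := abs_le.mp h.abs_growthU_add_le
  obtain ⟨hv₁, hv₂⟩ := abs_le.mp h.abs_V_sub_le
  have hUv : U * |V - 4 / 5| ≤ 1 / 4000 * (1 / 4000) :=
    mul_le_mul h.U_le h.abs_V_sub_le (abs_nonneg _) (by norm_num)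
  exact abs_le.mpr ⟨by linarith [h.U_le, h.w_le], by linarith [h.U_pos, h.w_le]⟩

lemma abs_Ffield_fst_le (f : ℝ → ℝ) (h : NearB₁ Υ σ U V W w) :
    |(Ffield Υ σ f U V W).1| ≤ U / 500 := by
  have hU := h.U_pos
  have hU1 : |1 - U| ≤ 1 := abs_le.mpr ⟨by linarith [h.U_le], by linarith⟩
  rw [Ffield_fst_eq]
  calc |U * (1 - U) * growthU Υ σ U V W| ≤ U * 1 * (1 / 500) :=
        abs_mul_le_mul (abs_mul_le_mul (abs_of_pos hU).le hU1) h.abs_growthU_le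
    _ = U / 500 := by ring

lemma div_ten_le_unstableCoord_deriv (f : ℝ → ℝ) (h : NearB₁ Υ σ U V W w)
    (hcone : U / 20 + 700 * w ≤ unstableCoord U V) :
    unstableCoord U V / 10 ≤ (Ffield Υ σ f U V W).2.1 + 4 / 25 * (Ffield Υ σ f U V W).1 := by
  set y := unstableCoord U V
  have hU := h.U_pos
  have hw := h.w_nonneg
  obtain ⟨hv₁, hv₂⟩ := abs_le.mp h.abs_V_sub_le
  obtain ⟨hQ, -⟩ := abs_le.mp h.abs_growthV_sub_le
  obtain ⟨hF₁, -⟩ := abs_le.mp (h.abs_Ffield_fst_le f)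
  have hUv : U * |V - 4 / 5| ≤ U * (1 / 4000) := mul_le_mul_of_nonneg_left h.abs_V_sub_le hU.le
  have hgrowthV : 6 / 5 * y ≤ growthV Υ σ U V W := by linarith
  have hVV : 3 / 20 ≤ V * (1 - V) := by nlinarith
  rw [Ffield_snd_fst_eq]
  calc y / 10 ≤ 3 / 20 * (6 / 5 * y) + 4 / 25 * -(U / 500) := by linarith
    _ ≤ V * (1 - V) * growthV Υ σ U V W + 4 / 25 * (Ffield Υ σ f U V W).1 := by
        gcongr
        linarith

lemma neg_mul_le_Ffield_fst (f : ℝ → ℝ) (h : NearB₁ Υ σ U V W w)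
    (hcone : unstableCoord U V ≤ U / 20 + 700 * w) :
    -(2700 * w) * U ≤ (Ffield Υ σ f U V W).1 := by
  have hU := h.U_pos
  have hw := h.w_nonneg
  obtain ⟨hG, -⟩ := abs_le.mp h.abs_growthU_add_le
  have hUv : U * |V - 4 / 5| ≤ U * (1 / 4000) := mul_le_mul_of_nonneg_left h.abs_V_sub_le hU.le
  have hgrowthU : -(2700 * w) ≤ growthU Υ σ U V W := by
    unfold unstableCoord at hcone
    linarith
  calc -(2700 * w) * U ≤ (1 - U) * growthU Υ σ U V W * U := by
        gcongr
        nlinarith [h.U_le]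
    _ = (Ffield Υ σ f U V W).1 := by rw [Ffield_fst_eq]; ring

lemma Ffield_snd_snd_le {f : ℝ → ℝ} {m : ℝ} (h : NearB₁ Υ σ U V W w) (hm : 0 ≤ m)
    (hmf : m ≤ f W) : (Ffield Υ σ f U V W).2.2 ≤ -(m / 2 * W) := by
  have hH := h.three_quarters_le_Hfun
  have hW₁ : W ≤ 1 / 4000 := h.W_le.trans h.w_le
  have hWH : 1 / 2 ≤ (1 - W) * Hfun σ U V W := by nlinarith
  have hrate : m / 2 ≤ f W * ((1 - W) * Hfun σ U V W) :=
    calc m / 2 = m * (1 / 2) := by ring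
      _ ≤ f W * ((1 - W) * Hfun σ U V W) := by gcongr; linarith
  calc (Ffield Υ σ f U V W).2.2 = -(W * (f W * ((1 - W) * Hfun σ U V W))) := by
        simp only [Ffield]; ring
    _ ≤ -(m / 2 * W) := by nlinarith [mul_le_mul_of_nonneg_left hrate h.W_nonneg]

end NearB₁

lemma eventually_nearB₁ {Υ σ : ℝ → ℝ} {U V W : ℝ → ℝ} {CΥ Cσ : ℝ} (hCΥ : 0 ≤ CΥ) (hCσ : 0 ≤ Cσ)
    (hΥ : ∀ x ∈ Icc (0 : ℝ) 1, |Υ x - 3 / 4| ≤ CΥ * x) (hσ : ∀ x ∈ Icc (0 : ℝ) 1, |σ x| ≤ Cσ * x)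
    (hUt : Tendsto U atTop (𝓝 0)) (hVt : Tendsto V atTop (𝓝 (4 / 5)))
    (hWt : Tendsto W atTop (𝓝 0)) (hU₀ : ∀ l, 0 < U l) (hW : ∀ l, W l ∈ Icc 0 1) :
    ∀ᶠ l in atTop, NearB₁ Υ σ (U l) (V l) (W l) ((1 + CΥ + Cσ) * W l) := by
  have hCW : Tendsto (fun l => (1 + CΥ + Cσ) * W l) atTop (𝓝 0) := by
    simpa using hWt.const_mul (1 + CΥ + Cσ)
  filter_upwards [hUt.eventually (ge_mem_nhds (by norm_num : (0 : ℝ) < 1 / 4000)),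
    hVt.eventually (Metric.closedBall_mem_nhds _ (by norm_num : (0 : ℝ) < 1 / 4000)),
    hCW.eventually (ge_mem_nhds (by norm_num : (0 : ℝ) < 1 / 4000))] with l hU hV hCW
  have hW₀ := (hW l).1
  refine ⟨hU₀ l, hU, hV, hW₀, by nlinarith, hCW, (hΥ _ (hW l)).trans ?_, (hσ _ (hW l)).trans ?_⟩
  all_goals nlinarith

lemma unstableCoord_lt_of_nearB₁ {Υ σ f : ℝ → ℝ} {U V W : ℝ → ℝ} {C m L : ℝ}
    (hU : ∀ l, HasDerivAt U (Ffield Υ σ f (U l) (V l) (W l)).1 l)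
    (hV : ∀ l, HasDerivAt V (Ffield Υ σ f (U l) (V l) (W l)).2.1 l)
    (hW : ∀ l, HasDerivAt W (Ffield Υ σ f (U l) (V l) (W l)).2.2 l)
    (hC : 0 ≤ C) (hm : 0 ≤ m) (hnear : ∀ l ≥ L, NearB₁ Υ σ (U l) (V l) (W l) (C * W l))
    (hf : ∀ l ≥ L, m ≤ f (W l)) (hlim : Tendsto (fun l => unstableCoord (U l) (V l)) atTop (𝓝 0)) :
    ∀ l ≥ L, unstableCoord (U l) (V l) < U l / 20 + 700 * (C * W l) := by
  have hcone_U : ∀ l ≥ L, U l / 20 + 700 * (C * W l) ≤ unstableCoord (U l) (V l) →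
      U l / 20 ≤ unstableCoord (U l) (V l) := fun l hl hcone => by
    linarith [mul_nonneg hC (hnear l hl).W_nonneg]
  refine forall_lt_of_tendsto_zero
    (fun l => ((hV l).sub_const (4 / 5)).add ((hU l).const_mul (4 / 25)))
    (fun l => ((hU l).div_const 20).add (((hW l).const_mul C).const_mul 700))
    (fun l hl hcone => ?_) (fun l hl hcone => ?_) (fun l hl hcone => ?_) hlim
  · linarith [hcone_U l hl hcone, (hnear l hl).U_pos]
  · linarith [hcone_U l hl hcone, (hnear l hl).U_pos,
      (hnear l hl).div_ten_le_unstableCoord_deriv f hcone]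
  · have hUy := hcone_U l hl hcone.le
    have hy' := (hnear l hl).div_ten_le_unstableCoord_deriv f hcone.le
    have hU' := (abs_le.mp ((hnear l hl).abs_Ffield_fst_le f)).2
    have hW' : C * (Ffield Υ σ f (U l) (V l) (W l)).2.2 ≤ 0 :=
      mul_nonpos_of_nonneg_of_nonpos hC <| ((hnear l hl).Ffield_snd_snd_le hm (hf l hl)).trans
        (neg_nonpos.2 (mul_nonneg (by linarith) (hnear l hl).W_nonneg))
    linarith [(hnear l hl).U_pos]

theorem stmt14_general
    (Υ σ f : ℝ → ℝ)
    (hΥ : ContDiffOn ℝ 1 Υ (Icc 0 1)) (hσ : ContDiffOn ℝ 1 σ (Icc 0 1))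
    (hf : ContDiffOn ℝ 1 f (Icc 0 1))
    (hΥ0 : Υ 0 = 3 / 4)
    (hσ0 : σ 0 = 0)
    (hf0 : 0 < f 0)
    (U V W : ℝ → ℝ)
    (hU : ∀ l : ℝ, HasDerivAt U (Ffield Υ σ f (U l) (V l) (W l)).1 l)
    (hV : ∀ l : ℝ, HasDerivAt V (Ffield Υ σ f (U l) (V l) (W l)).2.1 l)
    (hW : ∀ l : ℝ, HasDerivAt W (Ffield Υ σ f (U l) (V l) (W l)).2.2 l)
    (hint : ∀ l : ℝ, U l ∈ Ioo (0:ℝ) 1 ∧ V l ∈ Ioo (0:ℝ) 1 ∧ W l ∈ Ioo (0:ℝ) 1) :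
    ¬ Filter.Tendsto (fun l => (U l, V l, W l)) Filter.atTop
        (nhds ((0 : ℝ), (4 / 5 : ℝ), (0 : ℝ))) := by
  intro hconv
  have hUt : Tendsto U atTop (𝓝 0) := (continuous_fst.tendsto _).comp hconv
  have hVt : Tendsto V atTop (𝓝 (4 / 5)) := (continuous_snd.fst.tendsto _).comp hconv
  have hWt : Tendsto W atTop (𝓝 0) := (continuous_snd.snd.tendsto _).comp hconv
  have hWmem : ∀ l, W l ∈ Icc 0 1 := fun l => Ioo_subset_Icc_self (hint l).2.2
  obtain ⟨CΥ, hCΥ₀, hCΥ⟩ := exists_abs_sub_le_mul_of_contDiffOn hΥ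
  obtain ⟨Cσ, hCσ₀, hCσ⟩ := exists_abs_sub_le_mul_of_contDiffOn hσ
  simp only [hΥ0, hσ0, sub_zero] at hCΥ hCσ
  have hC : 0 ≤ 1 + CΥ + Cσ := by positivity
  have hfW : Tendsto (fun l => f (W l)) atTop (𝓝 (f 0)) :=
    (hf.continuousOn.continuousWithinAt (left_mem_Icc.2 zero_le_one)).tendsto.comp
      (tendsto_nhdsWithin_iff.2 ⟨hWt, Eventually.of_forall hWmem⟩)
  obtain ⟨L, hL⟩ := eventually_atTop.1 <|
    (eventually_nearB₁ hCΥ₀ hCσ₀ hCΥ hCσ hUt hVt hWt (fun l => (hint l).1.1) hWmem).and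
      (hfW.eventually (le_mem_nhds (half_lt_self hf0)))
  have hbelow := unstableCoord_lt_of_nearB₁ hU hV hW hC (by linarith)
    (fun l hl => (hL l hl).1) (fun l hl => (hL l hl).2)
    (by simpa [unstableCoord] using (hVt.sub_const (4 / 5)).add (hUt.const_mul (4 / 25)))
  refine not_tendsto_zero_of_deriv_ge (L := L) (by positivity : 0 ≤ 2700 * (1 + CΥ + Cσ))
    (by linarith : 0 < f 0 / 4) hU hW (fun l _ => (hint l).1.1) (fun l _ => (hWmem l).1)
    (fun l hl => ?_) (fun l hl => ?_) hUt
  · linarith [(hL l hl).1.neg_mul_le_Ffield_fst f (hbelow l hl).le]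
  · have := (hL l hl).1.Ffield_snd_snd_le (by linarith) (hL l hl).2
    linarith

/-- For `n₀ = 3` (`Υ(0) = 3/4`), no interior orbit converges to
the fixed point `B₁ = (0, 4/5, 0)` as `λ → ∞`. -/
theorem stmt14
    (Υ σ f : ℝ → ℝ)
    (hΥ : ContDiffOn ℝ 1 Υ (Icc 0 1)) (hσ : ContDiffOn ℝ 1 σ (Icc 0 1))
    (hf : ContDiffOn ℝ 1 f (Icc 0 1))
    (hfpos : ∀ x ∈ Icc (0:ℝ) 1, 0 < f x)
    (hσnonneg : ∀ x ∈ Icc (0:ℝ) 1, 0 ≤ σ x)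
    (hΥnonneg : ∀ x ∈ Icc (0:ℝ) 1, 0 ≤ Υ x)
    (γ₁ : ℝ) (hγ₁ : 1 < γ₁) (hγ₁' : γ₁ ≤ 2)
    (hΥ0 : Υ 0 = 3 / 4) (hΥ1 : Υ 1 = 1)
    (hσ0 : σ 0 = 0) (hσ1 : σ 1 = γ₁ - 1)
    (hf0 : 0 < f 0) (hf1 : 0 < f 1)
    (U V W : ℝ → ℝ)
    (hU : ∀ l : ℝ, HasDerivAt U (Ffield Υ σ f (U l) (V l) (W l)).1 l)
    (hV : ∀ l : ℝ, HasDerivAt V (Ffield Υ σ f (U l) (V l) (W l)).2.1 l)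
    (hW : ∀ l : ℝ, HasDerivAt W (Ffield Υ σ f (U l) (V l) (W l)).2.2 l)
    (hint : ∀ l : ℝ, U l ∈ Ioo (0:ℝ) 1 ∧ V l ∈ Ioo (0:ℝ) 1 ∧ W l ∈ Ioo (0:ℝ) 1) :
    ¬ Filter.Tendsto (fun l => (U l, V l, W l)) Filter.atTop
        (nhds ((0 : ℝ), (4 / 5 : ℝ), (0 : ℝ))) :=
  stmt14_general Υ σ f hΥ hσ hf hΥ0 hσ0 hf0 U V W hU hV hW hint
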